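/- arXiv:2204.12328 — 2 statements merged into one kernel-verified Lean document; each statement's English description precedes it below -/
import Mathlib

section
/- Let $\omega \geq 1$ and $\sigma_\omega(s) = 1 + s/\sqrt{\omega}$ on $[-\sqrt{\omega},\infty)$. For every absolutely continuous function $v : [-\sqrt{\omega},\infty) \to \mathbb{R}$ with $v, v' \in L^2(\sigma_\omega\, ds)$, there is a universal constant $C > 0$ (independent of $\omega$) such that $\sup_{s > -\sqrt{\omega}} \sigma_\omega(s)\, |v(s)|^2 \leq C \|v\|_{L^2(\sigma_\omega ds)} \|v'\|_{L^2(\sigma_\omega ds)}$. -/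
open Real MeasureTheory Set

/-! With `F = σ v²` and `σ, σ' ≥ 0`, one has `-F' = -σ' v² - 2 σ v v' ≤ 2 σ |v v'|`, so for
`s ≤ b` the drop `F s - F b` is at most `2 ∫ σ |v v'| ≤ 2 ‖v‖ ‖v'‖`, by Cauchy–Schwarz in
`L²(σ dt)`. Since `F` is integrable on `[s, ∞)`, `F b` is arbitrarily small for suitable `b`,
which gives the inequality with `C = 2` for every `ω > 0`. -/

section CauchySchwarz

variable {α : Type*} [MeasurableSpace α] {μ : Measure α}

theorem integral_mul_le_sqrt_mul_sqrt {f g : α → ℝ} (hf : 0 ≤ᵐ[μ] f) (hg : 0 ≤ᵐ[μ] g)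
    (hf₂ : MemLp f 2 μ) (hg₂ : MemLp g 2 μ) :
    ∫ x, f x * g x ∂μ ≤ √(∫ x, f x ^ 2 ∂μ) * √(∫ x, g x ^ 2 ∂μ) := by
  have h := integral_mul_le_Lp_mul_Lq_of_nonneg Real.HolderConjugate.two_two hf hg
    (by simpa using hf₂) (by simpa using hg₂)
  simpa only [Real.rpow_two, ← Real.sqrt_eq_rpow] using h

variable {f g w : α → ℝ}

theorem memLp_two_abs_mul_sqrt (hf : AEStronglyMeasurable f μ) (hw : AEStronglyMeasurable w μ)
    (hw₀ : 0 ≤ᵐ[μ] w) (hfw : Integrable (fun x => f x ^ 2 * w x) μ) :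
    MemLp (fun x => |f x| * √(w x)) 2 μ := by
  have hmeas := (continuous_abs.comp_aestronglyMeasurable hf).mul
    (continuous_sqrt.comp_aestronglyMeasurable hw)
  refine (memLp_two_iff_integrable_sq hmeas).2 (hfw.congr ?_)
  filter_upwards [hw₀] with x hx
  simp only [Pi.mul_apply, mul_pow, sq_abs, sq_sqrt hx]

theorem integrable_abs_mul_mul_of_integrable_sq_mul (hf : AEStronglyMeasurable f μ)
    (hg : AEStronglyMeasurable g μ) (hw : AEStronglyMeasurable w μ) (hw₀ : 0 ≤ᵐ[μ] w)
    (hfw : Integrable (fun x => f x ^ 2 * w x) μ) (hgw : Integrable (fun x => g x ^ 2 * w x) μ) :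
    Integrable (fun x => |f x * g x| * w x) μ := by
  refine ((memLp_two_abs_mul_sqrt hf hw hw₀ hfw).integrable_mul
    (memLp_two_abs_mul_sqrt hg hw hw₀ hgw)).congr ?_
  filter_upwards [hw₀] with x hx
  simp only [Pi.mul_apply, abs_mul]
  rw [mul_mul_mul_comm, mul_self_sqrt hx]

theorem integral_abs_mul_mul_le_sqrt_mul_sqrt (hf : AEStronglyMeasurable f μ)
    (hg : AEStronglyMeasurable g μ) (hw : AEStronglyMeasurable w μ) (hw₀ : 0 ≤ᵐ[μ] w)
    (hfw : Integrable (fun x => f x ^ 2 * w x) μ) (hgw : Integrable (fun x => g x ^ 2 * w x) μ) :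
    ∫ x, |f x * g x| * w x ∂μ ≤
      √(∫ x, f x ^ 2 * w x ∂μ) * √(∫ x, g x ^ 2 * w x ∂μ) := by
  have h := integral_mul_le_sqrt_mul_sqrt (Filter.Eventually.of_forall fun x => by positivity)
    (Filter.Eventually.of_forall fun x => by positivity)
    (memLp_two_abs_mul_sqrt hf hw hw₀ hfw) (memLp_two_abs_mul_sqrt hg hw hw₀ hgw)
  have hsq : ∀ {h : α → ℝ}, (fun x => (|h x| * √(w x)) ^ 2) =ᵐ[μ] fun x => h x ^ 2 * w x := by
    intro h
    filter_upwards [hw₀] with x hx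
    rw [mul_pow, sq_abs, sq_sqrt hx]
  rw [integral_congr_ae hsq, integral_congr_ae hsq] at h
  refine le_of_eq_of_le (integral_congr_ae ?_) h
  filter_upwards [hw₀] with x hx
  rw [abs_mul, mul_mul_mul_comm, mul_self_sqrt hx]

end CauchySchwarz

theorem MeasureTheory.IntegrableOn.exists_mem_lt {α : Type*} [MeasurableSpace α] {μ : Measure α}
    {s : Set α} {f : α → ℝ} (hs : MeasurableSet s) (hμs : μ s = ⊤) (hf : IntegrableOn f s μ)
    {ε : ℝ} (hε : 0 < ε) : ∃ x ∈ s, f x < ε := by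
  by_contra! hfε
  have hconst : IntegrableOn (fun _ => ε) s μ := by
    refine hf.mono' aestronglyMeasurable_const ?_
    filter_upwards [ae_restrict_mem hs] with x hx
    rw [Real.norm_of_nonneg hε.le]
    exact hfε x hx
  have hfin := (integrable_const_iff.1 hconst).resolve_left hε.ne'
  simpa [hμs] using hfin.measure_univ_lt_top

section WeightedEstimate

variable {σ σ' v v' : ℝ → ℝ}

theorem weight_mul_sq_sub_le_integral {s b : ℝ} (hsb : s ≤ b)
    (hσ : ∀ t ∈ Icc s b, HasDerivAt σ (σ' t) t) (hσ₀ : ∀ t ∈ Icc s b, 0 ≤ σ t)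
    (hσ'₀ : ∀ t ∈ Icc s b, 0 ≤ σ' t) (hv : ∀ t ∈ Icc s b, HasDerivAt v (v' t) t)
    (hvv' : IntegrableOn (fun t => |v t * v' t| * σ t) (Icc s b)) :
    σ s * v s ^ 2 - σ b * v b ^ 2 ≤ 2 * ∫ t in s..b, |v t * v' t| * σ t := by
  have hF : ∀ t ∈ Icc s b,
      HasDerivAt (fun t => -(σ t * v t ^ 2)) (-(σ' t * v t ^ 2 + σ t * (2 * v t * v' t))) t :=
    fun t ht => ((hσ t ht).fun_mul ((hv t ht).fun_pow 2)).fun_neg.congr_deriv (by ring)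
  -- This one-sided FTC needs only an integrable upper bound for the derivative, not the
  -- integrability of the derivative itself.
  have h := intervalIntegral.sub_le_integral_of_hasDeriv_right_of_le hsb
    (fun t ht => (hF t ht).continuousAt.continuousWithinAt)
    (fun t ht => (hF t (Ioo_subset_Icc_self ht)).hasDerivWithinAt) (hvv'.const_mul 2)
    (fun t ht => by
      have ht := Ioo_subset_Icc_self ht
      have := mul_nonneg (hσ'₀ t ht) (sq_nonneg (v t))
      have := mul_le_mul_of_nonneg_right (neg_abs_le (v t * v' t)) (hσ₀ t ht)
      linarith)
  rw [intervalIntegral.integral_const_mul] at h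
  linarith

theorem weight_mul_sq_le_two_mul_sqrt_mul_sqrt {c s : ℝ} (hcs : c ≤ s)
    (hσ : ∀ t ∈ Ici c, HasDerivAt σ (σ' t) t) (hσ₀ : ∀ t ∈ Ici c, 0 ≤ σ t)
    (hσ'₀ : ∀ t ∈ Ici c, 0 ≤ σ' t) (hv : ∀ t ∈ Ici c, HasDerivAt v (v' t) t)
    (hv₂ : IntegrableOn (fun t => v t ^ 2 * σ t) (Ici c))
    (hv'₂ : IntegrableOn (fun t => v' t ^ 2 * σ t) (Ici c)) :
    σ s * v s ^ 2 ≤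
      2 * √(∫ t in Ici c, v t ^ 2 * σ t) * √(∫ t in Ici c, v' t ^ 2 * σ t) := by
  have hσ_meas : AEStronglyMeasurable σ (volume.restrict (Ici c)) :=
    (HasDerivAt.continuousOn hσ).aestronglyMeasurable measurableSet_Ici
  have hv_meas : AEStronglyMeasurable v (volume.restrict (Ici c)) :=
    (HasDerivAt.continuousOn hv).aestronglyMeasurable measurableSet_Ici
  have hv'_meas : AEStronglyMeasurable v' (volume.restrict (Ici c)) := by
    refine (measurable_deriv v).aestronglyMeasurable.congr ?_
    filter_upwards [ae_restrict_mem measurableSet_Ici] with t ht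
    exact (hv t ht).deriv
  have hσ_ae : 0 ≤ᵐ[volume.restrict (Ici c)] σ := by
    filter_upwards [ae_restrict_mem measurableSet_Ici] with t ht
    exact hσ₀ t ht
  have hvv' : IntegrableOn (fun t => |v t * v' t| * σ t) (Ici c) :=
    integrable_abs_mul_mul_of_integrable_sq_mul hv_meas hv'_meas hσ_meas hσ_ae hv₂ hv'₂
  have hCS := integral_abs_mul_mul_le_sqrt_mul_sqrt hv_meas hv'_meas hσ_meas hσ_ae hv₂ hv'₂
  have hdrop : ∀ b, s ≤ b → σ s * v s ^ 2 - σ b * v b ^ 2 ≤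
      2 * √(∫ t in Ici c, v t ^ 2 * σ t) * √(∫ t in Ici c, v' t ^ 2 * σ t) := by
    intro b hsb
    have hsub : Icc s b ⊆ Ici c := fun t ht => hcs.trans ht.1
    calc σ s * v s ^ 2 - σ b * v b ^ 2 ≤ 2 * ∫ t in s..b, |v t * v' t| * σ t :=
          weight_mul_sq_sub_le_integral hsb (fun t ht => hσ t (hsub ht))
            (fun t ht => hσ₀ t (hsub ht)) (fun t ht => hσ'₀ t (hsub ht))
            (fun t ht => hv t (hsub ht)) (hvv'.mono_set hsub)
      _ ≤ 2 * ∫ t in Ici c, |v t * v' t| * σ t := by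
          rw [intervalIntegral.integral_of_le hsb]
          refine mul_le_mul_of_nonneg_left (setIntegral_mono_set hvv' ?_
            (Ioc_subset_Icc_self.trans hsub).eventuallyLE) zero_le_two
          filter_upwards [hσ_ae] with t ht
          exact mul_nonneg (abs_nonneg _) ht
      _ ≤ _ := by rw [mul_assoc]; gcongr
  refine le_of_forall_pos_le_add fun ε hε => ?_
  have hF : IntegrableOn (fun t => σ t * v t ^ 2) (Ici s) :=
    (hv₂.mono_set (Ici_subset_Ici.2 hcs)).congr_fun (fun t _ => mul_comm _ _) measurableSet_Ici
  obtain ⟨b, hsb, hb⟩ := hF.exists_mem_lt measurableSet_Ici (by simp) hε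
  linarith [hdrop b hsb]

end WeightedEstimate

/-- Weighted radial Gagliardo–Nirenberg inequality: with weight `σ_ω(s) = 1 + s/√ω` on
`[-√ω, ∞)`, one has `sup_{s > -√ω} σ_ω(s) v(s)² ≤ C ‖v‖_{L²(σ_ω ds)} ‖v'‖_{L²(σ_ω ds)}`
with a universal constant `C` independent of `ω ≥ 1`. -/
theorem stmt1 :
    ∃ C : ℝ, 0 < C ∧ ∀ (ω : ℝ), 1 ≤ ω → ∀ (v v' : ℝ → ℝ),
      (∀ s ∈ Set.Ici (-Real.sqrt ω), HasDerivAt v (v' s) s) →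
      MeasureTheory.IntegrableOn (fun s => v s ^ 2 * (1 + s / Real.sqrt ω))
        (Set.Ici (-Real.sqrt ω)) →
      MeasureTheory.IntegrableOn (fun s => v' s ^ 2 * (1 + s / Real.sqrt ω))
        (Set.Ici (-Real.sqrt ω)) →
      ∀ s : ℝ, -Real.sqrt ω < s →
        (1 + s / Real.sqrt ω) * (v s) ^ 2 ≤
          C * Real.sqrt (∫ t in Set.Ici (-Real.sqrt ω), v t ^ 2 * (1 + t / Real.sqrt ω)) *
            Real.sqrt (∫ t in Set.Ici (-Real.sqrt ω), v' t ^ 2 * (1 + t / Real.sqrt ω)) := by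
  refine ⟨2, two_pos, fun ω hω v v' hv hv₂ hv'₂ s hs => ?_⟩
  have hω₀ : 0 < √ω := sqrt_pos.2 (by linarith)
  refine weight_mul_sq_le_two_mul_sqrt_mul_sqrt (σ := fun t => 1 + t / √ω)
    (σ' := fun _ => 1 / √ω) hs.le (fun t _ => ?_) (fun t ht => ?_) (fun _ _ => by positivity)
    hv hv₂ hv'₂
  · simpa using ((hasDerivAt_id t).div_const √ω).const_add 1
  · have : -1 ≤ t / √ω := by rw [le_div_iff₀ hω₀]; linarith [mem_Ici.1 ht]
    linarith
end

section
/- Let $\kappa = -1$ and $0 < m \leq 2\pi^2$. Then the constant function $Q_\infty \equiv \sqrt{m/(2\pi)}$ minimizes the focusing energy $E_\infty[w] = \tfrac{1}{2}\|w'\|_{L^2(\mathbb{S}^1)}^2 - \tfrac{1}{8\pi}\|w\|_{L^4(\mathbb{S}^1)}^4$ among $w \in H^1(\mathbb{S}^1)$ with $\|w\|_{L^2(\mathbb{S}^1)}^2 = m$, and it solves $-Q_\infty'' - \frac{1}{2\pi}Q_\infty^3 = -\mu_\infty Q_\infty$ with $\mu_\infty = \frac{m}{(2\pi)^2}$. 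-/
/-! For `w` with `∫ w² = m` put `c = m / (2π)` and `f = w² - c`, which has mean zero, and let `G`
be the primitive of `f` with mean zero. Integrating by parts, `‖f‖² = -2 ∫ G w w'`, and
`∫ G² f = ∫ (G³/3)' = 0` gives `‖G w‖² = c ‖G‖²`. Cauchy–Schwarz and Wirtinger's inequality
`‖G‖ ≤ ‖f‖` (a consequence of Parseval) give `‖f‖⁴ ≤ 4c ‖G‖² ‖w'‖² ≤ 4c ‖f‖² ‖w'‖²`, hence
`∫ w⁴ = ‖f‖² + m²/(2π) ≤ 4c ‖w'‖² + m²/(2π)`. Since `c ≤ π` is exactly `m ≤ 2π²`, the kinetic term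
absorbs the first summand and `E[w] ≥ -m²/(16π²) = E[Q]`. -/

open Real MeasureTheory Set

theorem ContinuousOn.memLp_restrict_Ioc {E : Type*} [NormedAddCommGroup E] {p : ENNReal}
    {a b : ℝ} {f : ℝ → E} (hf : ContinuousOn f (Icc a b)) :
    MemLp f p (volume.restrict (Ioc a b)) := by
  obtain ⟨C, hC⟩ := isCompact_Icc.exists_bound_of_continuousOn hf
  refine MemLp.of_bound ((hf.mono Ioc_subset_Icc_self).aestronglyMeasurable measurableSet_Ioc) C ?_
  exact (ae_restrict_iff' measurableSet_Ioc).2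
    (.of_forall fun x hx => hC x (Ioc_subset_Icc_self hx))

section Fourier

open Complex

theorem fourierCoeffOn_deriv {a b : ℝ} (hab : a < b) {f f' : ℝ → ℂ} {n : ℤ} (hn : n ≠ 0)
    (hf : ∀ x ∈ uIcc a b, HasDerivAt f (f' x) x) (hf' : IntervalIntegrable f' volume a b)
    (hfab : f a = f b) :
    fourierCoeffOn hab f' n = 2 * π * I * n / (b - a : ℝ) * fourierCoeffOn hab f n := by
  rw [fourierCoeffOn_of_hasDerivAt hab hn hf hf', hfab, sub_self, mul_zero, zero_sub]
  have : ((b - a : ℝ) : ℂ) ≠ 0 := by exact_mod_cast (sub_pos.2 hab).ne'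
  field_simp
  push_cast
  ring

theorem norm_fourierCoeffOn_le_deriv {a b : ℝ} (hab : a < b) {f f' : ℝ → ℂ} (n : ℤ)
    (hf : ∀ x ∈ uIcc a b, HasDerivAt f (f' x) x) (hf' : IntervalIntegrable f' volume a b)
    (hfab : f a = f b) (hmean : ∫ x in a..b, f x = 0) :
    ‖fourierCoeffOn hab f n‖ ≤ (b - a) / (2 * π) * ‖fourierCoeffOn hab f' n‖ := by
  rcases eq_or_ne n 0 with rfl | hn
  · have : fourierCoeffOn hab f 0 = 0 := by simp [fourierCoeffOn_eq_integral, hmean]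
    rw [this, norm_zero]
    exact mul_nonneg (div_nonneg (sub_pos.2 hab).le (by positivity)) (norm_nonneg _)
  have hba : 0 < b - a := sub_pos.2 hab
  have hn1 : (1 : ℝ) ≤ |(n : ℝ)| := by exact_mod_cast Int.one_le_abs hn
  have hnorm : ‖2 * π * I * n / (b - a : ℝ)‖ = 2 * π * |(n : ℝ)| / (b - a) := by
    simp only [norm_div, norm_mul, norm_real, Real.norm_eq_abs, norm_I, norm_intCast,
      abs_of_pos pi_pos, abs_of_pos hba, Complex.norm_ofNat]
    ring
  rw [fourierCoeffOn_deriv hab hn hf hf' hfab, norm_mul, ← mul_assoc, hnorm]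
  refine le_mul_of_one_le_left (norm_nonneg _) ?_
  rw [div_mul_div_comm, le_div_iff₀ (by positivity)]
  nlinarith [mul_le_mul_of_nonneg_left hn1 (mul_pos pi_pos hba).le]

theorem integral_sq_le_mul_integral_deriv_sq {a b : ℝ} (hab : a < b) {g g' : ℝ → ℝ}
    (hg : ∀ x ∈ uIcc a b, HasDerivAt g (g' x) x) (hg' : ContinuousOn g' (uIcc a b))
    (hgab : g a = g b) (hmean : ∫ x in a..b, g x = 0) :
    ∫ x in a..b, g x ^ 2 ≤ ((b - a) / (2 * π)) ^ 2 * ∫ x in a..b, g' x ^ 2 := by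
  set G : ℝ → ℂ := fun x => g x
  set G' : ℝ → ℂ := fun x => g' x
  have hG : ∀ x ∈ uIcc a b, HasDerivAt G (G' x) x := fun x hx => (hg x hx).ofReal_comp
  have hG' : ContinuousOn G' (Icc a b) :=
    uIcc_of_le hab.le ▸ continuous_ofReal.comp_continuousOn hg'
  have hGc : ContinuousOn G (Icc a b) := fun x hx =>
    (hG x (Icc_subset_uIcc hx)).continuousAt.continuousWithinAt
  have hsq : ∀ u : ℝ → ℝ, ∫ x in a..b, ‖(u x : ℂ)‖ ^ 2 = ∫ x in a..b, u x ^ 2 := fun u => by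
    simp only [norm_real, Real.norm_eq_abs, sq_abs]
  have hle := hasSum_le (fun n => ?_) (hasSum_sq_fourierCoeffOn hab hGc.memLp_restrict_Ioc)
    ((hasSum_sq_fourierCoeffOn hab hG'.memLp_restrict_Ioc).mul_left (((b - a) / (2 * π)) ^ 2))
  · rw [hsq, hsq, smul_eq_mul, smul_eq_mul, mul_left_comm] at hle
    exact le_of_mul_le_mul_left hle (inv_pos.2 (sub_pos.2 hab))
  · rw [← mul_pow]
    refine pow_le_pow_left₀ (norm_nonneg _) (norm_fourierCoeffOn_le_deriv hab n hG ?_ ?_ ?_) 2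
    · exact hG'.intervalIntegrable_of_Icc hab.le
    · exact congrArg ofReal hgab
    · rw [intervalIntegral.integral_ofReal, hmean, ofReal_zero]

end Fourier

theorem sq_integral_mul_le {a b : ℝ} (hab : a ≤ b) {u v : ℝ → ℝ} (hu : Continuous u)
    (hv : Continuous v) :
    (∫ x in a..b, u x * v x) ^ 2 ≤ (∫ x in a..b, u x ^ 2) * ∫ x in a..b, v x ^ 2 := by
  have hquad : ∀ t : ℝ, 0 ≤ (∫ x in a..b, v x ^ 2) * (t * t) + 2 * (∫ x in a..b, u x * v x) * t
      + ∫ x in a..b, u x ^ 2 := fun t => by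
    have h := intervalIntegral.integral_nonneg (μ := volume) hab fun x _ =>
      sq_nonneg (t * v x + u x)
    have hexp : ∀ x, (t * v x + u x) ^ 2 = (t * t) * v x ^ 2 + (2 * t) * (u x * v x) + u x ^ 2 :=
      fun x => by ring
    simp only [hexp] at h
    rw [intervalIntegral.integral_add (by apply Continuous.intervalIntegrable; fun_prop)
        (by apply Continuous.intervalIntegrable; fun_prop),
      intervalIntegral.integral_add (by apply Continuous.intervalIntegrable; fun_prop)
        (by apply Continuous.intervalIntegrable; fun_prop),
      intervalIntegral.integral_const_mul, intervalIntegral.integral_const_mul] at h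
    linarith
  have h := discrim_le_zero hquad
  rw [discrim] at h
  linarith

theorem exists_hasDerivAt_eq_and_integral_eq_zero {a b : ℝ} (hab : a < b) {f : ℝ → ℝ}
    (hf : Continuous f) (hf0 : ∫ x in a..b, f x = 0) :
    ∃ G : ℝ → ℝ, (∀ x, HasDerivAt G (f x) x) ∧ G a = G b ∧ ∫ x in a..b, G x = 0 := by
  set F : ℝ → ℝ := fun x => ∫ t in a..x, f t
  have hF : ∀ x, HasDerivAt F (f x) x := fun x => (hf.integral_hasStrictDerivAt a x).hasDerivAt
  have hFc : Continuous F := continuous_iff_continuousAt.2 fun x => (hF x).continuousAt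
  refine ⟨fun x => F x - (∫ x in a..b, F x) / (b - a), fun x => (hF x).sub_const _, ?_, ?_⟩
  · simp [F, hf0]
  · rw [intervalIntegral.integral_sub (hFc.intervalIntegrable _ _) intervalIntegrable_const,
      intervalIntegral.integral_const, smul_eq_mul, mul_div_cancel₀ _ (sub_pos.2 hab).ne', sub_self]

theorem integral_sq_sub_sq_le {a b c : ℝ} (hab : a < b) {w w' : ℝ → ℝ}
    (hw : ∀ x, HasDerivAt w (w' x) x) (hw' : Continuous w') (hwab : w a = w b)
    (hmass : ∫ x in a..b, w x ^ 2 = c * (b - a)) :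
    ∫ x in a..b, (w x ^ 2 - c) ^ 2 ≤ 4 * c * ((b - a) / (2 * π)) ^ 2 * ∫ x in a..b, w' x ^ 2 := by
  have hwc : Continuous w := continuous_iff_continuousAt.2 fun x => (hw x).continuousAt
  have hc : 0 ≤ c := nonneg_of_mul_nonneg_left
    (hmass ▸ intervalIntegral.integral_nonneg hab.le fun x _ => sq_nonneg (w x)) (sub_pos.2 hab)
  set f : ℝ → ℝ := fun x => w x ^ 2 - c
  set S := ∫ x in a..b, f x ^ 2
  set X := ∫ x in a..b, w' x ^ 2
  have hf : ∀ x, HasDerivAt f (2 * w x * w' x) x := fun x => by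
    simpa [f, mul_comm] using ((hw x).pow 2).sub_const c
  have hfc : Continuous f := by fun_prop
  have hf0 : ∫ x in a..b, f x = 0 := by
    simp only [f]
    rw [intervalIntegral.integral_sub (f := fun x => w x ^ 2)
        ((hwc.pow 2).intervalIntegrable _ _) intervalIntegrable_const,
      hmass, intervalIntegral.integral_const, smul_eq_mul, mul_comm, sub_self]
  obtain ⟨G, hG, hGab, hG0⟩ := exists_hasDerivAt_eq_and_integral_eq_zero hab hfc hf0
  have hGc : Continuous G := continuous_iff_continuousAt.2 fun x => (hG x).continuousAt
  have hW : ∫ x in a..b, G x ^ 2 ≤ ((b - a) / (2 * π)) ^ 2 * S :=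
    integral_sq_le_mul_integral_deriv_sq hab (fun x _ => hG x) hfc.continuousOn hGab hG0
  have hparts : S = -2 * ∫ x in a..b, G x * w x * w' x := by
    have h := intervalIntegral.integral_mul_deriv_eq_deriv_mul (a := a) (b := b)
      (fun x _ => hG x) (fun x _ => hf x) (hfc.intervalIntegrable _ _)
      (by apply Continuous.intervalIntegrable; fun_prop)
    rw [hGab, show f a = f b by simp [f, hwab], sub_self, zero_sub] at h
    have h2 : ∫ x in a..b, G x * (2 * w x * w' x) = 2 * ∫ x in a..b, G x * w x * w' x := by
      rw [← intervalIntegral.integral_const_mul]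
      exact intervalIntegral.integral_congr fun x _ => by ring
    simp only [S, sq]
    linarith
  have hcube : ∫ x in a..b, G x ^ 2 * f x = 0 := by
    have h := intervalIntegral.integral_comp_mul_deriv (a := a) (b := b) (fun x _ => hG x)
      hfc.continuousOn (continuous_pow 2)
    simpa only [Function.comp_apply, hGab, intervalIntegral.integral_same] using h
  have hGw : ∫ x in a..b, (G x * w x) ^ 2 = c * ∫ x in a..b, G x ^ 2 := by
    have h : ∀ x, (G x * w x) ^ 2 = c * G x ^ 2 + G x ^ 2 * f x := fun x => by ring
    simp only [h]
    rw [intervalIntegral.integral_add (by apply Continuous.intervalIntegrable; fun_prop)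
      (by apply Continuous.intervalIntegrable; fun_prop), hcube, add_zero,
      intervalIntegral.integral_const_mul]
  have hCS := sq_integral_mul_le (u := fun x => G x * w x) hab.le (hGc.mul hwc) hw'
  have hX : 0 ≤ X := intervalIntegral.integral_nonneg hab.le fun x _ => sq_nonneg (w' x)
  have hS : 0 ≤ S := intervalIntegral.integral_nonneg hab.le fun x _ => sq_nonneg (f x)
  have hSS : S * S ≤ S * (4 * c * ((b - a) / (2 * π)) ^ 2 * X) := calc
    S * S = 4 * (∫ x in a..b, G x * w x * w' x) ^ 2 := by rw [hparts]; ring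
    _ ≤ 4 * (c * ∫ x in a..b, G x ^ 2) * X := by rw [← hGw]; linarith
    _ ≤ 4 * (c * (((b - a) / (2 * π)) ^ 2 * S)) * X := by gcongr
    _ = S * (4 * c * ((b - a) / (2 * π)) ^ 2 * X) := by ring
  rcases hS.eq_or_lt with hS0 | hSpos
  · rw [← hS0]; positivity
  · exact le_of_mul_le_mul_left hSS hSpos

theorem integral_pow_four_le {a b c : ℝ} (hab : a < b) {w w' : ℝ → ℝ}
    (hw : ∀ x, HasDerivAt w (w' x) x) (hw' : Continuous w') (hwab : w a = w b)
    (hmass : ∫ x in a..b, w x ^ 2 = c * (b - a)) :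
    ∫ x in a..b, w x ^ 4 ≤
      4 * c * ((b - a) / (2 * π)) ^ 2 * (∫ x in a..b, w' x ^ 2) + c ^ 2 * (b - a) := by
  have hwc : Continuous w := continuous_iff_continuousAt.2 fun x => (hw x).continuousAt
  have hexp : ∫ x in a..b, (w x ^ 2 - c) ^ 2 = (∫ x in a..b, w x ^ 4) - c ^ 2 * (b - a) := by
    have h : ∀ x, (w x ^ 2 - c) ^ 2 = w x ^ 4 - 2 * c * w x ^ 2 + c ^ 2 := fun x => by ring
    simp only [h]
    rw [intervalIntegral.integral_add (by apply Continuous.intervalIntegrable; fun_prop)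
        intervalIntegrable_const,
      intervalIntegral.integral_sub (by apply Continuous.intervalIntegrable; fun_prop)
        (by apply Continuous.intervalIntegrable; fun_prop),
      intervalIntegral.integral_const_mul, hmass, intervalIntegral.integral_const, smul_eq_mul]
    ring
  linarith [integral_sq_sub_sq_le hab hw hw' hwab hmass]

/-- Focusing case (`κ = -1`) with `0 < m ≤ 2π²`: the constant `Q_∞ ≡ √(m/(2π))` minimizes
`E[w] = (1/2)‖w'‖² - (1/(8π))‖w‖_{L⁴}⁴` among `w ∈ H¹(S¹)` with `‖w‖_{L²}² = m`, and it
solves `-Q'' - (1/(2π)) Q³ = -μ_∞ Q` with `μ_∞ = m/(2π)²`. -/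
theorem stmt5 (m : ℝ) (hm : 0 < m) (hm2 : m ≤ 2 * Real.pi ^ 2) :
    ∀ (Q : ℝ → ℝ) (μ : ℝ) (Eng : (ℝ → ℝ) → (ℝ → ℝ) → ℝ),
      Q = (fun _ : ℝ => Real.sqrt (m / (2 * Real.pi))) →
      μ = m / (2 * Real.pi) ^ 2 →
      Eng = (fun w w' =>
        (1 / 2) * (∫ θ in (0:ℝ)..(2 * Real.pi), (w' θ) ^ 2) -
        (1 / (8 * Real.pi)) * (∫ θ in (0:ℝ)..(2 * Real.pi), (w θ) ^ 4)) →
      ((∀ w w' : ℝ → ℝ, Function.Periodic w (2 * Real.pi) →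
          (∀ x, HasDerivAt w (w' x) x) → Continuous w' →
          (∫ θ in (0:ℝ)..(2 * Real.pi), (w θ) ^ 2) = m →
          Eng Q (fun _ => 0) ≤ Eng w w') ∧
       (∀ θ : ℝ, -(deriv (deriv Q) θ) - (1 / (2 * Real.pi)) * (Q θ) ^ 3 = -μ * Q θ)) := by
  rintro Q μ Eng rfl rfl rfl
  have hπ := pi_pos
  have hQ2 : √(m / (2 * π)) ^ 2 = m / (2 * π) := sq_sqrt (by positivity)
  refine ⟨fun w w' hper hw hw' hmass => ?_, fun θ => ?_⟩
  · have h4 := integral_pow_four_le (c := m / (2 * π)) two_pi_pos hw hw'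
      (by simpa using (hper 0).symm)
      (by rw [hmass, sub_zero]; field_simp)
    have hX := intervalIntegral.integral_nonneg (μ := volume) two_pi_pos.le fun x _ =>
      sq_nonneg (w' x)
    have hc : m / (2 * π) ≤ π := by rw [div_le_iff₀ two_pi_pos]; nlinarith
    simp only [intervalIntegral.integral_const, sub_zero, smul_eq_mul, zero_pow two_ne_zero,
      mul_zero, show √(m / (2 * π)) ^ 4 = (√(m / (2 * π)) ^ 2) ^ 2 by ring, hQ2] at h4 ⊢
    rw [div_self two_pi_pos.ne', one_pow, mul_one] at h4
    set c := m / (2 * π)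
    set X := ∫ x in (0:ℝ)..2 * π, w' x ^ 2
    have hcX : 1 / (8 * π) * (4 * c * X) ≤ 1 / 2 * X := by
      rw [← sub_nonneg]
      have : 1 / 2 * X - 1 / (8 * π) * (4 * c * X) = (π - c) * X / (2 * π) := by
        field_simp; ring
      rw [this]
      exact div_nonneg (mul_nonneg (sub_nonneg.2 hc) hX) two_pi_pos.le
    linarith [mul_le_mul_of_nonneg_left h4 (by positivity : (0:ℝ) ≤ 1 / (8 * π))]
  · simp only [deriv_const', deriv_const, neg_zero, zero_sub, pow_succ _ 2, hQ2]
    field_simp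
end
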